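/- arXiv:1808.05573 — 2 statements merged into one kernel-verified Lean document; each statement's English description precedes it below -/
import Mathlib

section
/- Let k ≥ 1 be a natural number, let χ be an integer with c := −2χ + 2 − k > 0, and let 0 ≤ b₁ ≤ b₂ ≤ … ≤ b_k be real numbers. Define f(x) = 6·c·Real.arcsin(1/(2·Real.cosh(x/2))) + 2·∑_{i=1}^{k−1} Real.arcsin(Real.cosh(b_i/2)/Real.cosh(x/2)). Then f is continuous on [b_k, ∞), strictly decreasing on [b_k, ∞), and f(x) tends to 0 as x → ∞. -/
open Filter Real Set Topology

/-! Since `cosh` increases on `[0, ∞)` and tends to `∞`, every summand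
`arcsin (a / cosh (x / 2))` with `a ≥ 0` is antitone on `[0, ∞)` and tends to `arcsin 0 = 0`.
For the leading term `a = 1/2 ∈ (0, 1]`, where `arcsin` is strictly increasing, so that term is
strictly antitone, and its coefficient `6c` is positive. Finally `[b_k, ∞) ⊆ [0, ∞)` because
`b_k ≥ b_1 ≥ 0`. -/

lemma tendsto_cosh_atTop : Tendsto cosh atTop atTop :=
  tendsto_atTop_mono (fun x => by rw [cosh_eq]; linarith [exp_pos (-x)])
    (tendsto_exp_atTop.atTop_div_const two_pos)

lemma continuous_arcsin_div_cosh_half (a : ℝ) :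
    Continuous fun x => arcsin (a / cosh (x / 2)) := by
  fun_prop (disch := exact fun x => (cosh_pos _).ne')

lemma cosh_half_lt_cosh_half {x y : ℝ} (hx : 0 ≤ x) (hxy : x < y) :
    cosh (x / 2) < cosh (y / 2) :=
  cosh_strictMonoOn (mem_Ici.2 (by positivity)) (mem_Ici.2 (by linarith)) (by linarith)

-- `arcsin` is monotone on all of `ℝ` (constant outside `[-1, 1]`), so `a` needs no upper bound.
lemma antitoneOn_arcsin_div_cosh_half {a : ℝ} (ha : 0 ≤ a) :
    AntitoneOn (fun x => arcsin (a / cosh (x / 2))) (Ici 0) := by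
  intro x hx y _ hxy
  rcases hxy.eq_or_lt with rfl | hlt
  · rfl
  · exact monotone_arcsin <| div_le_div_of_nonneg_left ha (cosh_pos _)
      (cosh_half_lt_cosh_half hx hlt).le

lemma strictAntiOn_arcsin_div_cosh_half {a : ℝ} (ha₀ : 0 < a) (ha₁ : a ≤ 1) :
    StrictAntiOn (fun x => arcsin (a / cosh (x / 2))) (Ici 0) := by
  have mem_Icc (x : ℝ) : a / cosh (x / 2) ∈ Icc (-1) 1 := by
    have := one_le_cosh (x / 2)
    constructor
    · linarith [div_nonneg ha₀.le (cosh_pos (x / 2)).le]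
    · rw [div_le_one (cosh_pos _)]; linarith
  intro x hx y _ hxy
  exact strictMonoOn_arcsin (mem_Icc y) (mem_Icc x)
    (div_lt_div_of_pos_left ha₀ (cosh_pos _) (cosh_half_lt_cosh_half hx hxy))

lemma tendsto_arcsin_div_cosh_half (a : ℝ) :
    Tendsto (fun x => arcsin (a / cosh (x / 2))) atTop (𝓝 0) := by
  have := tendsto_const_nhds (x := a) |>.div_atTop
    (tendsto_cosh_atTop.comp (tendsto_id.atTop_div_const two_pos))
  simpa [Function.comp_def] using (continuous_arcsin.tendsto 0).comp this

theorem stmt_2_general (k : ℕ) (hk : 1 ≤ k) (c : ℤ)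
    (hcpos : 0 < c) (b : ℕ → ℝ) (hb0 : 0 ≤ b 1)
    (hbmono : ∀ i j, 1 ≤ i → i ≤ j → j ≤ k → b i ≤ b j)
    (f : ℝ → ℝ)
    (hf : ∀ x, f x = 6 * (c : ℝ) * Real.arcsin (1 / (2 * Real.cosh (x / 2)))
      + 2 * ∑ i ∈ Finset.Icc 1 (k - 1),
          Real.arcsin (Real.cosh (b i / 2) / Real.cosh (x / 2))) :
    ContinuousOn f (Set.Ici (b k)) ∧ StrictAntiOn f (Set.Ici (b k)) ∧
      Tendsto f atTop (nhds 0) := by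
  have hbk : 0 ≤ b k := hb0.trans (hbmono 1 k le_rfl hk le_rfl)
  replace hf : f = fun x => 6 * (c : ℝ) * arcsin (2⁻¹ / cosh (x / 2))
      + 2 * ∑ i ∈ Finset.Icc 1 (k - 1), arcsin (cosh (b i / 2) / cosh (x / 2)) :=
    funext fun x => by rw [hf, div_mul_eq_div_div, one_div]
  subst hf
  refine ⟨?_, ?_, ?_⟩
  · exact (Continuous.add (continuous_const.mul (continuous_arcsin_div_cosh_half _))
      (continuous_const.mul (continuous_finsetSum _ fun i _ =>
        continuous_arcsin_div_cosh_half _))).continuousOn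
  · intro x hx y hy hxy
    have hx₀ : x ∈ Ici 0 := hbk.trans hx
    have hy₀ : y ∈ Ici 0 := hbk.trans hy
    have hleading :=
      strictAntiOn_arcsin_div_cosh_half (a := 2⁻¹) (by norm_num) (by norm_num) hx₀ hy₀ hxy
    have hsum := Finset.sum_le_sum fun i (_ : i ∈ Finset.Icc 1 (k - 1)) =>
      antitoneOn_arcsin_div_cosh_half (cosh_pos (b i / 2)).le hx₀ hy₀ hxy.le
    have hcoeff : (0 : ℝ) < 6 * c := mul_pos (by norm_num) (Int.cast_pos.2 hcpos)
    exact add_lt_add_of_lt_of_le (mul_lt_mul_of_pos_left hleading hcoeff)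
      (mul_le_mul_of_nonneg_left hsum zero_le_two)
  · simpa using ((tendsto_arcsin_div_cosh_half _).const_mul (6 * (c : ℝ))).add
      ((tendsto_finsetSum _ fun i _ => tendsto_arcsin_div_cosh_half _).const_mul 2)

/-- The function `f = f_{(b₁,…,b_{k−1})}` from Lemma F:
`f(x) = 6c·arcsin(1/(2cosh(x/2))) + 2∑_{i=1}^{k−1} arcsin(cosh(bᵢ/2)/cosh(x/2))`
(with `c = −2χ + 2 − k > 0` and `0 ≤ b₁ ≤ ⋯ ≤ b_k`) is continuous on `[b_k, ∞)`,
strictly decreasing on `[b_k, ∞)`, and tends to `0` as `x → ∞`. -/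
theorem stmt_2 (k : ℕ) (hk : 1 ≤ k) (χ : ℤ) (c : ℤ) (hc : c = -2 * χ + 2 - (k : ℤ))
    (hcpos : 0 < c) (b : ℕ → ℝ) (hb0 : 0 ≤ b 1)
    (hbmono : ∀ i j, 1 ≤ i → i ≤ j → j ≤ k → b i ≤ b j)
    (f : ℝ → ℝ)
    (hf : ∀ x, f x = 6 * (c : ℝ) * Real.arcsin (1 / (2 * Real.cosh (x / 2)))
      + 2 * ∑ i ∈ Finset.Icc 1 (k - 1),
          Real.arcsin (Real.cosh (b i / 2) / Real.cosh (x / 2))) :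
    ContinuousOn f (Set.Ici (b k)) ∧ StrictAntiOn f (Set.Ici (b k)) ∧
      Tendsto f atTop (nhds 0) :=
  stmt_2_general k hk c hcpos b hb0 hbmono f hf
end

section
/- Let k ≥ 1 be a natural number, let χ be an integer with c := −2χ + 2 − k > 0, and let 0 ≤ b₁ ≤ b₂ ≤ … ≤ b_k be real numbers. Define f(x) = 6·c·Real.arcsin(1/(2·Real.cosh(x/2))) + 2·∑_{i=1}^{k−1} Real.arcsin(Real.cosh(b_i/2)/Real.cosh(x/2)). Then the equation f(x) + 2·Real.arcsin(Real.cosh(b_k/2)/Real.cosh(x/2)) = 2π has a solution x ∈ [b_k, ∞) if and only if f(b_k) ≥ π; moreover, when a solution exists it is unique in [b_k, ∞). -/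
open Real Set Filter Topology

/-!
Writing `g x` for the left-hand side of the equation, every summand of `g` is a continuous
non-increasing function of `x ≥ 0` tending to `0`, and the last summand
`arcsin (cosh (b_k / 2) / cosh (x / 2))` is strictly decreasing on `[b_k, ∞)`, where it starts
at `π / 2`. So `g` decreases strictly from `g b_k = f b_k + π` to `0` on `[b_k, ∞)`, and by the
intermediate value theorem it takes the value `2π` there exactly when `2π ≤ f b_k + π`, and then
only once.
-/

theorem exists_mem_Ici_eq_iff_le_of_antitoneOn {g : ℝ → ℝ} {b L v : ℝ}
    (hcont : ContinuousOn g (Ici b)) (hanti : AntitoneOn g (Ici b))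
    (hlim : Tendsto g atTop (𝓝 L)) (hLv : L < v) :
    (∃ x ∈ Ici b, g x = v) ↔ v ≤ g b := by
  constructor
  · rintro ⟨x, hx, rfl⟩
    exact hanti self_mem_Ici hx hx
  · intro hv
    obtain ⟨N, hN⟩ := eventually_atTop.mp (hlim.eventually_lt_const hLv)
    have hb : b ≤ max N b := le_max_right N b
    obtain ⟨x, hx, hgx⟩ := intermediate_value_Icc' hb (hcont.mono Icc_subset_Ici_self)
      ⟨(hN _ (le_max_left N b)).le, hv⟩
    exact ⟨x, hx.1, hgx⟩

namespace Real

theorem tendsto_cosh_atTop : Tendsto cosh atTop atTop :=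
  tendsto_atTop_mono (fun x => by rw [cosh_eq]; linarith [(exp_pos (-x)).le])
    (tendsto_exp_atTop.atTop_div_const two_pos)

theorem cosh_half_le_cosh_half {x y : ℝ} (hx : 0 ≤ x) (hxy : x ≤ y) :
    cosh (x / 2) ≤ cosh (y / 2) :=
  cosh_le_cosh.mpr (abs_le_abs (by linarith) (by linarith))

theorem continuous_arcsin_div_cosh_half (a : ℝ) :
    Continuous fun x => arcsin (a / cosh (x / 2)) := by
  fun_prop (disch := exact fun x => (cosh_pos _).ne')

theorem tendsto_arcsin_div_cosh_half_atTop (a : ℝ) :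
    Tendsto (fun x => arcsin (a / cosh (x / 2))) atTop (𝓝 0) := by
  have hratio : Tendsto (fun x => a / cosh (x / 2)) atTop (𝓝 0) :=
    tendsto_const_nhds.div_atTop (tendsto_cosh_atTop.comp (tendsto_id.atTop_div_const two_pos))
  simpa only [Function.comp_def, arcsin_zero] using (continuous_arcsin.tendsto 0).comp hratio

theorem antitoneOn_arcsin_div_cosh_half {a : ℝ} (ha : 0 ≤ a) :
    AntitoneOn (fun x => arcsin (a / cosh (x / 2))) (Ici 0) := fun _ hx _ _ hxy =>
  monotone_arcsin (div_le_div_of_nonneg_left ha (cosh_pos _) (cosh_half_le_cosh_half hx hxy))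

theorem strictAntiOn_arcsin_cosh_half_div_cosh_half {β : ℝ} (hβ : 0 ≤ β) :
    StrictAntiOn (fun x => arcsin (cosh (β / 2) / cosh (x / 2))) (Ici β) := by
  intro x hx y hy hxy
  have hmem : ∀ z ∈ Ici β, cosh (β / 2) / cosh (z / 2) ∈ Icc (-1) 1 := fun z hz =>
    ⟨by linarith [div_pos (cosh_pos (β / 2)) (cosh_pos (z / 2))],
      (div_le_one (cosh_pos _)).mpr (cosh_half_le_cosh_half hβ hz)⟩
  refine strictMonoOn_arcsin (hmem y hy) (hmem x hx) ?_
  refine div_lt_div_of_pos_left (cosh_pos _) (cosh_pos _) ?_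
  rw [cosh_lt_cosh, abs_of_nonneg (by linarith [mem_Ici.mp hx]),
    abs_of_nonneg (by linarith [mem_Ici.mp hx])]
  linarith

end Real

noncomputable def angleSum (c : ℝ) (s : Finset ℕ) (b : ℕ → ℝ) (x : ℝ) : ℝ :=
  6 * c * arcsin (1 / (2 * cosh (x / 2))) + 2 * ∑ i ∈ s, arcsin (cosh (b i / 2) / cosh (x / 2))

section angleSum

variable (c : ℝ) (s : Finset ℕ) (b : ℕ → ℝ)

theorem angleSum_eq (x : ℝ) : angleSum c s b x =
    6 * c * arcsin (1 / 2 / cosh (x / 2)) + 2 * ∑ i ∈ s, arcsin (cosh (b i / 2) / cosh (x / 2)) := by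
  rw [angleSum, div_mul_eq_div_div]

theorem continuous_angleSum : Continuous (angleSum c s b) := by
  simp only [funext (angleSum_eq c s b)]
  have := Real.continuous_arcsin_div_cosh_half
  fun_prop

theorem tendsto_angleSum_atTop : Tendsto (angleSum c s b) atTop (𝓝 0) := by
  simp only [funext (angleSum_eq c s b)]
  simpa using ((Real.tendsto_arcsin_div_cosh_half_atTop (1 / 2)).const_mul (6 * c)).add
    ((tendsto_finsetSum s fun i _ => Real.tendsto_arcsin_div_cosh_half_atTop _).const_mul 2)

theorem antitoneOn_angleSum {c : ℝ} (hc : 0 ≤ c) : AntitoneOn (angleSum c s b) (Ici 0) := by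
  intro x hx y hy hxy
  simp only [angleSum_eq]
  gcongr ?_ + 2 * ?_
  · exact mul_le_mul_of_nonneg_left
      (Real.antitoneOn_arcsin_div_cosh_half (by norm_num) hx hy hxy) (by positivity)
  · exact Finset.sum_le_sum fun i _ =>
      Real.antitoneOn_arcsin_div_cosh_half (cosh_pos _).le hx hy hxy

end angleSum

theorem stmt_3_general (k : ℕ) (hk : 1 ≤ k) (c : ℤ)
    (hcpos : 0 < c) (b : ℕ → ℝ) (hb0 : 0 ≤ b 1)
    (hbmono : ∀ i j, 1 ≤ i → i ≤ j → j ≤ k → b i ≤ b j)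
    (f : ℝ → ℝ)
    (hf : ∀ x, f x = 6 * (c : ℝ) * Real.arcsin (1 / (2 * Real.cosh (x / 2)))
      + 2 * ∑ i ∈ Finset.Icc 1 (k - 1),
          Real.arcsin (Real.cosh (b i / 2) / Real.cosh (x / 2))) :
    ((∃ x ∈ Set.Ici (b k),
        f x + 2 * Real.arcsin (Real.cosh (b k / 2) / Real.cosh (x / 2)) = 2 * Real.pi)
      ↔ Real.pi ≤ f (b k)) ∧
    (∀ x ∈ Set.Ici (b k), ∀ y ∈ Set.Ici (b k),
      f x + 2 * Real.arcsin (Real.cosh (b k / 2) / Real.cosh (x / 2)) = 2 * Real.pi →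
      f y + 2 * Real.arcsin (Real.cosh (b k / 2) / Real.cosh (y / 2)) = 2 * Real.pi →
      x = y) := by
  have hbk : 0 ≤ b k := hb0.trans (hbmono 1 k le_rfl hk le_rfl)
  obtain rfl : f = angleSum c (Finset.Icc 1 (k - 1)) b := funext hf
  set g := fun x => angleSum c (Finset.Icc 1 (k - 1)) b x
    + 2 * arcsin (cosh (b k / 2) / cosh (x / 2))
  have hanti : StrictAntiOn g (Ici (b k)) :=
    ((antitoneOn_angleSum _ b (by positivity)).mono (Ici_subset_Ici.mpr hbk)).add_strictAnti
      ((strictMono_mul_left_of_pos two_pos).comp_strictAntiOn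
        (Real.strictAntiOn_arcsin_cosh_half_div_cosh_half hbk))
  have hcont : Continuous g := by
    have := Real.continuous_arcsin_div_cosh_half
    have := continuous_angleSum c (Finset.Icc 1 (k - 1)) b
    fun_prop
  have hlim : Tendsto g atTop (𝓝 0) := by
    simpa using (tendsto_angleSum_atTop _ _ b).add
      ((Real.tendsto_arcsin_div_cosh_half_atTop (cosh (b k / 2))).const_mul 2)
  have hgbk : g (b k) = angleSum c (Finset.Icc 1 (k - 1)) b (b k) + π := by
    simp only [g, div_self (cosh_pos _).ne', arcsin_one]
    ring
  refine ⟨?_, fun x hx y hy hgx hgy => hanti.injOn hx hy (hgx.trans hgy.symm)⟩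
  rw [exists_mem_Ici_eq_iff_le_of_antitoneOn hcont.continuousOn hanti.antitoneOn hlim
    (by positivity), hgbk]
  constructor <;> intro h <;> linarith

/-- Lemma F: the equation
`f(x) + 2·arcsin(cosh(b_k/2)/cosh(x/2)) = 2π` has a solution `x ∈ [b_k, ∞)`
if and only if `f(b_k) ≥ π`; and any such solution in `[b_k, ∞)` is unique. -/
theorem stmt_3 (k : ℕ) (hk : 1 ≤ k) (χ : ℤ) (c : ℤ) (hc : c = -2 * χ + 2 - (k : ℤ))
    (hcpos : 0 < c) (b : ℕ → ℝ) (hb0 : 0 ≤ b 1)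
    (hbmono : ∀ i j, 1 ≤ i → i ≤ j → j ≤ k → b i ≤ b j)
    (f : ℝ → ℝ)
    (hf : ∀ x, f x = 6 * (c : ℝ) * Real.arcsin (1 / (2 * Real.cosh (x / 2)))
      + 2 * ∑ i ∈ Finset.Icc 1 (k - 1),
          Real.arcsin (Real.cosh (b i / 2) / Real.cosh (x / 2))) :
    ((∃ x ∈ Set.Ici (b k),
        f x + 2 * Real.arcsin (Real.cosh (b k / 2) / Real.cosh (x / 2)) = 2 * Real.pi)
      ↔ Real.pi ≤ f (b k)) ∧
    (∀ x ∈ Set.Ici (b k), ∀ y ∈ Set.Ici (b k),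
      f x + 2 * Real.arcsin (Real.cosh (b k / 2) / Real.cosh (x / 2)) = 2 * Real.pi →
      f y + 2 * Real.arcsin (Real.cosh (b k / 2) / Real.cosh (y / 2)) = 2 * Real.pi →
      x = y) :=
  stmt_3_general k hk c hcpos b hb0 hbmono f hf
end
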